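/- For every t ∈ ℝ and every y ∈ ℝ, the value H_t(iy) is a strictly positive real number; in particular, H_t has no zeroes on the imaginary axis. -/
import Mathlib


noncomputable def Phi (u : ℝ) : ℝ :=
  ∑' n : ℕ, (2 * Real.pi ^ 2 * (n + 1 : ℝ) ^ 4 * Real.exp (9 * u)
      - 3 * Real.pi * (n + 1 : ℝ) ^ 2 * Real.exp (5 * u))
    * Real.exp (-Real.pi * (n + 1 : ℝ) ^ 2 * Real.exp (4 * u))

noncomputable def H (t : ℝ) (z : ℂ) : ℂ :=
  ∫ u in Set.Ioi (0 : ℝ),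
    ((Real.exp (t * u ^ 2) * Phi u : ℝ) : ℂ) * Complex.cos (z * (u : ℂ))

open Real MeasureTheory
open scoped ENNReal

/-- The general term of the series defining `Phi`. -/
noncomputable def phiTerm (n : ℕ) (u : ℝ) : ℝ :=
  (2 * Real.pi ^ 2 * (n + 1 : ℝ) ^ 4 * Real.exp (9 * u)
      - 3 * Real.pi * (n + 1 : ℝ) ^ 2 * Real.exp (5 * u))
    * Real.exp (-Real.pi * (n + 1 : ℝ) ^ 2 * Real.exp (4 * u))

lemma Phi_eq (u : ℝ) : Phi u = ∑' n : ℕ, phiTerm n u := rfl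

lemma nat_one_le (n : ℕ) : (1 : ℝ) ≤ (n : ℝ) + 1 :=
  le_add_of_nonneg_left n.cast_nonneg

lemma nat_sq_ge_one (n : ℕ) : (1 : ℝ) ≤ ((n : ℝ) + 1) ^ 2 := by
  nlinarith [sq_nonneg ((n : ℝ)), n.cast_nonneg (α := ℝ)]

lemma nat_sq_le (n : ℕ) : ((n : ℝ) + 1) ^ 2 ≤ ((n : ℝ) + 1) ^ 4 := by
  nlinarith [mul_nonneg (sq_nonneg ((n:ℝ) + 1)) (sub_nonneg.2 (nat_sq_ge_one n))]

lemma summable_aux {c : ℝ} (hc : 0 < c) :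
    Summable (fun n : ℕ => ((n : ℝ) + 1) ^ 4 * Real.exp (-c * ((n : ℝ) + 1))) := by
  have hr : ‖Real.exp (-c)‖ < 1 := by
    rw [Real.norm_eq_abs, abs_of_pos (Real.exp_pos _)]
    exact Real.exp_lt_one_iff.2 (by linarith)
  have h := summable_pow_mul_geometric_of_norm_lt_one (R := ℝ) 4 hr
  have h2 := (summable_nat_add_iff 1).2 h
  refine h2.congr fun n => ?_
  have he : Real.exp (-c) ^ (n + 1) = Real.exp (-c * ((n : ℝ) + 1)) := by
    rw [← Real.exp_nat_mul]
    congr 1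
    push_cast
    ring
  rw [he]
  push_cast
  ring

lemma phiTerm_abs_le (n : ℕ) (u : ℝ) :
    |phiTerm n u| ≤ (2 * Real.pi ^ 2 * Real.exp (9 * u) + 3 * Real.pi * Real.exp (5 * u))
      * (((n : ℝ) + 1) ^ 4 * Real.exp (-(Real.pi * Real.exp (4 * u)) * ((n : ℝ) + 1))) := by
  have hn1 := nat_one_le n
  have hsq := nat_sq_le n
  have hpi := Real.pi_pos
  have hE := Real.exp_pos (4 * u)
  have h1 : |phiTerm n u| ≤
      (2 * Real.pi ^ 2 * ((n : ℝ) + 1) ^ 4 * Real.exp (9 * u)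
        + 3 * Real.pi * ((n : ℝ) + 1) ^ 2 * Real.exp (5 * u))
      * Real.exp (-Real.pi * ((n : ℝ) + 1) ^ 2 * Real.exp (4 * u)) := by
    rw [phiTerm, abs_mul, abs_of_pos (Real.exp_pos _)]
    gcongr
    refine (abs_sub _ _).trans ?_
    rw [abs_of_nonneg (by positivity), abs_of_nonneg (by positivity)]
  refine h1.trans ?_
  have hexp : Real.exp (-Real.pi * ((n : ℝ) + 1) ^ 2 * Real.exp (4 * u))
      ≤ Real.exp (-(Real.pi * Real.exp (4 * u)) * ((n : ℝ) + 1)) := by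
    apply Real.exp_le_exp.2
    have h : ((n : ℝ) + 1) ≤ ((n : ℝ) + 1) ^ 2 := by nlinarith
    nlinarith [mul_pos hpi hE]
  have hcoef : 2 * Real.pi ^ 2 * ((n : ℝ) + 1) ^ 4 * Real.exp (9 * u)
        + 3 * Real.pi * ((n : ℝ) + 1) ^ 2 * Real.exp (5 * u)
      ≤ (2 * Real.pi ^ 2 * Real.exp (9 * u) + 3 * Real.pi * Real.exp (5 * u))
        * ((n : ℝ) + 1) ^ 4 := by
    nlinarith [mul_nonneg (mul_nonneg (mul_nonneg (by norm_num : (0:ℝ) ≤ 3) hpi.le)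
      (Real.exp_pos (5 * u)).le) (sub_nonneg.2 hsq)]
  calc (2 * Real.pi ^ 2 * ((n : ℝ) + 1) ^ 4 * Real.exp (9 * u)
        + 3 * Real.pi * ((n : ℝ) + 1) ^ 2 * Real.exp (5 * u))
      * Real.exp (-Real.pi * ((n : ℝ) + 1) ^ 2 * Real.exp (4 * u))
      ≤ ((2 * Real.pi ^ 2 * Real.exp (9 * u) + 3 * Real.pi * Real.exp (5 * u))
          * ((n : ℝ) + 1) ^ 4)
        * Real.exp (-(Real.pi * Real.exp (4 * u)) * ((n : ℝ) + 1)) := by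
        refine mul_le_mul hcoef hexp (Real.exp_pos _).le (by positivity)
    _ = _ := by ring

lemma summable_phiTerm (u : ℝ) : Summable (fun n => phiTerm n u) := by
  refine Summable.of_abs (Summable.of_nonneg_of_le (fun n => abs_nonneg _)
    (fun n => phiTerm_abs_le n u) ?_)
  exact (summable_aux (by positivity : (0:ℝ) < Real.pi * Real.exp (4 * u))).mul_left _

lemma phiTerm_pos {u : ℝ} (hu : 0 ≤ u) (n : ℕ) : 0 < phiTerm n u := by
  have hn1 := nat_one_le n
  have hsq := nat_sq_le n
  have hpi := Real.pi_gt_three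
  have h5 := Real.exp_pos (5 * u)
  have h9 : Real.exp (5 * u) ≤ Real.exp (9 * u) := Real.exp_le_exp.2 (by linarith)
  have hn2 : (1 : ℝ) ≤ ((n:ℝ) + 1) ^ 2 := by nlinarith
  have c1 : 3 * Real.pi * ((n:ℝ) + 1) ^ 2 * Real.exp (5 * u)
      ≤ 3 * Real.pi * ((n:ℝ) + 1) ^ 4 * Real.exp (9 * u) := by
    refine mul_le_mul ?_ h9 h5.le (by positivity)
    nlinarith
  have c2 : 3 * Real.pi * ((n:ℝ) + 1) ^ 4 * Real.exp (9 * u)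
      < 2 * Real.pi ^ 2 * ((n:ℝ) + 1) ^ 4 * Real.exp (9 * u) := by
    have h32 : 3 * Real.pi < 2 * Real.pi ^ 2 := by nlinarith
    have hpos : (0:ℝ) < ((n:ℝ) + 1) ^ 4 * Real.exp (9 * u) := by positivity
    nlinarith
  have key : 0 < 2 * Real.pi ^ 2 * ((n:ℝ) + 1) ^ 4 * Real.exp (9 * u)
      - 3 * Real.pi * ((n:ℝ) + 1) ^ 2 * Real.exp (5 * u) := by
    have : (0:ℝ) < 3 * Real.pi * ((n:ℝ) + 1) ^ 2 * Real.exp (5 * u) := by positivity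
    linarith
  exact mul_pos key (Real.exp_pos _)

lemma Phi_pos {u : ℝ} (hu : 0 ≤ u) : 0 < Phi u := by
  rw [Phi_eq]
  exact Summable.tsum_pos (summable_phiTerm u) (fun n => (phiTerm_pos hu n).le) 0 (phiTerm_pos hu 0)

/-- The auxiliary constant `S`. -/
noncomputable def Sconst : ℝ :=
  ∑' n : ℕ, ((n : ℝ) + 1) ^ 4 * Real.exp (-(Real.pi / 2) * ((n : ℝ) + 1) ^ 2)

lemma summable_Sconst :
    Summable (fun n : ℕ => ((n : ℝ) + 1) ^ 4 * Real.exp (-(Real.pi / 2) * ((n : ℝ) + 1) ^ 2)) := by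
  refine Summable.of_nonneg_of_le (fun n => by positivity) (fun n => ?_)
    (summable_aux (by positivity : (0:ℝ) < Real.pi / 2))
  have hn1 := nat_one_le n
  have he : Real.exp (-(Real.pi / 2) * ((n : ℝ) + 1) ^ 2)
      ≤ Real.exp (-(Real.pi / 2) * ((n : ℝ) + 1)) := by
    apply Real.exp_le_exp.2
    nlinarith [mul_nonneg (le_of_lt (by positivity : (0:ℝ) < Real.pi / 2))
      (mul_nonneg (by positivity : (0:ℝ) ≤ (n:ℝ) + 1) (n.cast_nonneg (α := ℝ)))]
  exact mul_le_mul_of_nonneg_left he (by positivity)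

lemma Sconst_nonneg : 0 ≤ Sconst :=
  tsum_nonneg fun n => by positivity

lemma Phi_le {u : ℝ} (hu : 0 ≤ u) :
    Phi u ≤ 2 * Real.pi ^ 2 * Sconst * Real.exp (9 * u - Real.pi / 2 * Real.exp (4 * u)) := by
  rw [Phi_eq]
  have key : ∀ n : ℕ, phiTerm n u ≤
      (2 * Real.pi ^ 2 * Real.exp (9 * u - Real.pi / 2 * Real.exp (4 * u)))
        * (((n : ℝ) + 1) ^ 4 * Real.exp (-(Real.pi / 2) * ((n : ℝ) + 1) ^ 2)) := by
    intro n
    have hn1 := nat_one_le n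
    have hn2 : (1 : ℝ) ≤ ((n:ℝ) + 1) ^ 2 := by nlinarith
    have h4 : (1 : ℝ) ≤ Real.exp (4 * u) := Real.one_le_exp (by linarith)
    have hpi := Real.pi_pos
    have h1 : phiTerm n u ≤ 2 * Real.pi ^ 2 * ((n:ℝ) + 1) ^ 4 * Real.exp (9 * u)
        * Real.exp (-Real.pi * ((n:ℝ) + 1) ^ 2 * Real.exp (4 * u)) := by
      rw [phiTerm]
      gcongr
      have hp : (0:ℝ) < 3 * Real.pi * ((n:ℝ) + 1) ^ 2 * Real.exp (5 * u) := by positivity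
      linarith
    refine h1.trans ?_
    have hexp : Real.exp (-Real.pi * ((n : ℝ) + 1) ^ 2 * Real.exp (4 * u))
        ≤ Real.exp (-(Real.pi / 2) * ((n : ℝ) + 1) ^ 2 - Real.pi / 2 * Real.exp (4 * u)) := by
      apply Real.exp_le_exp.2
      nlinarith [mul_nonneg (sub_nonneg.2 hn2) (sub_nonneg.2 h4)]
    calc 2 * Real.pi ^ 2 * ((n:ℝ) + 1) ^ 4 * Real.exp (9 * u)
        * Real.exp (-Real.pi * ((n:ℝ) + 1) ^ 2 * Real.exp (4 * u))
        ≤ 2 * Real.pi ^ 2 * ((n:ℝ) + 1) ^ 4 * Real.exp (9 * u)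
          * Real.exp (-(Real.pi / 2) * ((n : ℝ) + 1) ^ 2 - Real.pi / 2 * Real.exp (4 * u)) := by
          gcongr
      _ = (2 * Real.pi ^ 2 * Real.exp (9 * u - Real.pi / 2 * Real.exp (4 * u)))
            * (((n : ℝ) + 1) ^ 4 * Real.exp (-(Real.pi / 2) * ((n : ℝ) + 1) ^ 2)) := by
          rw [show (-(Real.pi / 2) * ((n : ℝ) + 1) ^ 2 - Real.pi / 2 * Real.exp (4 * u))
              = (-(Real.pi / 2) * ((n : ℝ) + 1) ^ 2) + -(Real.pi / 2 * Real.exp (4 * u)) by ring,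
            Real.exp_add,
            show (9 * u - Real.pi / 2 * Real.exp (4 * u))
              = 9 * u + -(Real.pi / 2 * Real.exp (4 * u)) by ring,
            Real.exp_add]
          ring
  calc (∑' n, phiTerm n u)
      ≤ ∑' n : ℕ, (2 * Real.pi ^ 2 * Real.exp (9 * u - Real.pi / 2 * Real.exp (4 * u)))
          * (((n : ℝ) + 1) ^ 4 * Real.exp (-(Real.pi / 2) * ((n : ℝ) + 1) ^ 2)) :=
        Summable.tsum_le_tsum key (summable_phiTerm u) (summable_Sconst.mul_left _)
    _ = 2 * Real.pi ^ 2 * Sconst * Real.exp (9 * u - Real.pi / 2 * Real.exp (4 * u)) := by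
        rw [tsum_mul_left, Sconst]; ring

lemma measurable_Phi : Measurable Phi := by
  have h : ∀ N : ℕ, Measurable (fun u => ∑ n ∈ Finset.range N, phiTerm n u) := by
    intro N
    apply Finset.measurable_sum
    intro n _
    apply Measurable.mul
    · apply Measurable.sub <;> exact (measurable_const.mul (Real.measurable_exp.comp
        (measurable_const.mul measurable_id)))
    · exact Real.measurable_exp.comp ((measurable_const.mul (Real.measurable_exp.comp
        (measurable_const.mul measurable_id))))
  refine measurable_of_tendsto_metrizable h ?_
  rw [tendsto_pi_nhds]
  intro u
  exact (summable_phiTerm u).hasSum.tendsto_sum_nat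

/-- The real integrand. -/
noncomputable def F (t y u : ℝ) : ℝ := Real.exp (t * u ^ 2) * Phi u * Real.cosh (y * u)

lemma F_pos (t y : ℝ) {u : ℝ} (hu : 0 < u) : 0 < F t y u :=
  mul_pos (mul_pos (Real.exp_pos _) (Phi_pos hu.le)) (Real.cosh_pos (y * u))

lemma cubic_bound (a b u : ℝ) (ha : 0 ≤ a) (hb : 0 ≤ b) (hu : 0 ≤ u) :
    a * u ^ 2 + b * u ≤ 16 * u ^ 3 + 12 * u ^ 2 + (a ^ 3 / 256 + b ^ 2 / 48) := by
  have h1 : a * u ^ 2 ≤ 16 * u ^ 3 + a ^ 3 / 256 := by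
    nlinarith [mul_nonneg (sq_nonneg (4 * u - a / 4)) (by positivity : (0:ℝ) ≤ u + a / 16),
      mul_nonneg (mul_nonneg ha ha) hu]
  have h2 : b * u ≤ 12 * u ^ 2 + b ^ 2 / 48 := by nlinarith [sq_nonneg (24 * u - b)]
  linarith

lemma exp_cubic (u : ℝ) (hu : 0 ≤ u) :
    1 + 4 * u + 8 * u ^ 2 + 32 / 3 * u ^ 3 ≤ Real.exp (4 * u) := by
  have h := Real.sum_le_exp_of_nonneg (by linarith : (0:ℝ) ≤ 4 * u) 4
  have hs : ∑ i ∈ Finset.range 4, (4 * u) ^ i / (i.factorial : ℝ)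
      = 1 + 4 * u + 8 * u ^ 2 + 32 / 3 * u ^ 3 := by
    simp [Finset.sum_range_succ, Nat.factorial]
    try ring
  linarith [hs ▸ h]

lemma exponent_bound (t y u : ℝ) (hu : 0 ≤ u) :
    t * u ^ 2 + 9 * u + |y| * u
      ≤ Real.pi / 2 * Real.exp (4 * u) - u + (|t| ^ 3 / 256 + (11 + |y|) ^ 2 / 48) := by
  have hE := exp_cubic u hu
  have hpi := Real.pi_gt_three
  have hcb := cubic_bound |t| (11 + |y|) u (abs_nonneg t) (by positivity) hu
  have ht : t * u ^ 2 ≤ |t| * u ^ 2 := by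
    have := le_abs_self t
    nlinarith [sq_nonneg u]
  have hmul : Real.pi / 2 * (1 + 4 * u + 8 * u ^ 2 + 32 / 3 * u ^ 3)
      ≤ Real.pi / 2 * Real.exp (4 * u) :=
    mul_le_mul_of_nonneg_left hE (by positivity)
  nlinarith [mul_nonneg hu hu, mul_nonneg (mul_nonneg hu hu) hu]

lemma cosh_le_exp_abs (x : ℝ) : Real.cosh x ≤ Real.exp |x| := by
  rw [Real.cosh_eq]
  have h1 : Real.exp x ≤ Real.exp |x| := Real.exp_le_exp.2 (le_abs_self x)
  have h2 : Real.exp (-x) ≤ Real.exp |x| := Real.exp_le_exp.2 (neg_le_abs x)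
  linarith

lemma F_bound (t y : ℝ) {u : ℝ} (hu : 0 < u) :
    F t y u ≤ (2 * Real.pi ^ 2 * Sconst * Real.exp (|t| ^ 3 / 256 + (11 + |y|) ^ 2 / 48))
      * Real.exp (-1 * u) := by
  have hC : (0:ℝ) ≤ 2 * Real.pi ^ 2 * Sconst := mul_nonneg (by positivity) Sconst_nonneg
  have hPhi := Phi_le hu.le
  have hcosh : Real.cosh (y * u) ≤ Real.exp (|y| * u) := by
    refine (cosh_le_exp_abs _).trans (Real.exp_le_exp.2 ?_)
    rw [abs_mul, abs_of_pos hu]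
  have h1 : F t y u ≤ Real.exp (t * u ^ 2)
      * (2 * Real.pi ^ 2 * Sconst * Real.exp (9 * u - Real.pi / 2 * Real.exp (4 * u)))
      * Real.exp (|y| * u) := by
    unfold F
    have hP := Phi_pos hu.le
    calc Real.exp (t * u ^ 2) * Phi u * Real.cosh (y * u)
        ≤ Real.exp (t * u ^ 2)
          * (2 * Real.pi ^ 2 * Sconst * Real.exp (9 * u - Real.pi / 2 * Real.exp (4 * u)))
          * Real.cosh (y * u) := by
          refine mul_le_mul_of_nonneg_right ?_ (Real.cosh_pos (y * u)).le
          exact mul_le_mul_of_nonneg_left hPhi (Real.exp_pos _).le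
      _ ≤ _ := by
          refine mul_le_mul_of_nonneg_left hcosh ?_
          have : (0:ℝ) ≤ 2 * Real.pi ^ 2 * Sconst
              * Real.exp (9 * u - Real.pi / 2 * Real.exp (4 * u)) :=
            mul_nonneg hC (Real.exp_pos _).le
          exact mul_nonneg (Real.exp_pos _).le this
  refine h1.trans ?_
  have e1 : Real.exp (t * u ^ 2)
      * (2 * Real.pi ^ 2 * Sconst * Real.exp (9 * u - Real.pi / 2 * Real.exp (4 * u)))
      * Real.exp (|y| * u)
      = (2 * Real.pi ^ 2 * Sconst)
        * Real.exp (t * u ^ 2 + (9 * u - Real.pi / 2 * Real.exp (4 * u)) + |y| * u) := by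
    rw [Real.exp_add (t * u ^ 2 + (9 * u - Real.pi / 2 * Real.exp (4 * u))) (|y| * u),
      Real.exp_add (t * u ^ 2) (9 * u - Real.pi / 2 * Real.exp (4 * u))]
    ring
  have e2 : (2 * Real.pi ^ 2 * Sconst * Real.exp (|t| ^ 3 / 256 + (11 + |y|) ^ 2 / 48))
      * Real.exp (-1 * u)
      = (2 * Real.pi ^ 2 * Sconst)
        * Real.exp ((|t| ^ 3 / 256 + (11 + |y|) ^ 2 / 48) + -1 * u) := by
    rw [Real.exp_add (|t| ^ 3 / 256 + (11 + |y|) ^ 2 / 48) (-1 * u)]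
    ring
  rw [e1, e2]
  refine mul_le_mul_of_nonneg_left (Real.exp_le_exp.2 ?_) hC
  have := exponent_bound t y u hu.le
  linarith

lemma measurable_F (t y : ℝ) : Measurable (F t y) := by
  unfold F
  apply Measurable.mul
  · exact (Real.measurable_exp.comp (measurable_const.mul (measurable_id.pow_const 2))).mul
      measurable_Phi
  · exact Real.measurable_cosh.comp (measurable_const.mul measurable_id)

lemma integrable_F (t y : ℝ) : IntegrableOn (F t y) (Set.Ioi (0:ℝ)) := by
  have hint : IntegrableOn (fun u => (2 * Real.pi ^ 2 * Sconst
      * Real.exp (|t| ^ 3 / 256 + (11 + |y|) ^ 2 / 48)) * Real.exp (-1 * u)) (Set.Ioi (0:ℝ)) :=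
    (exp_neg_integrableOn_Ioi 0 one_pos).const_mul _
  refine Integrable.mono' hint ((measurable_F t y).aestronglyMeasurable) ?_
  filter_upwards [ae_restrict_mem measurableSet_Ioi] with u hu
  rw [Real.norm_eq_abs, abs_of_pos (F_pos t y hu)]
  exact F_bound t y hu

lemma integral_F_pos (t y : ℝ) : 0 < ∫ u in Set.Ioi (0:ℝ), F t y u := by
  have hnn : 0 ≤ᵐ[volume.restrict (Set.Ioi (0:ℝ))] F t y := by
    filter_upwards [ae_restrict_mem measurableSet_Ioi] with u hu
    exact (F_pos t y hu).le
  rw [setIntegral_pos_iff_support_of_nonneg_ae hnn (integrable_F t y)]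
  have hss : Set.Ioi (0:ℝ) ⊆ Function.support (F t y) ∩ Set.Ioi (0:ℝ) := fun u hu =>
    ⟨(F_pos t y hu).ne', hu⟩
  calc (0 : ℝ≥0∞) < volume (Set.Ioi (0:ℝ)) := by simp [Real.volume_Ioi]
    _ ≤ volume (Function.support (F t y) ∩ Set.Ioi (0:ℝ)) := measure_mono hss

lemma H_eq (t y : ℝ) :
    H t ((y : ℂ) * Complex.I) = ((∫ u in Set.Ioi (0:ℝ), F t y u : ℝ) : ℂ) := by
  unfold H
  have hcongr : ∀ u ∈ Set.Ioi (0:ℝ),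
      ((Real.exp (t * u ^ 2) * Phi u : ℝ) : ℂ) * Complex.cos ((y : ℂ) * Complex.I * (u : ℂ))
        = ((F t y u : ℝ) : ℂ) := by
    intro u _
    have h : (y : ℂ) * Complex.I * (u : ℂ) = ((y * u : ℝ) : ℂ) * Complex.I := by
      push_cast; ring
    rw [h, Complex.cos_mul_I, ← Complex.ofReal_cosh]
    unfold F
    push_cast
    ring
  rw [setIntegral_congr_fun measurableSet_Ioi hcongr]
  exact integral_ofReal

/-- `H_t` is strictly positive on the imaginary axis; in particular it has no
zeroes there. -/
theorem H_positive_on_imaginary_axis (t y : ℝ) :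
    0 < (H t ((y : ℂ) * Complex.I)).re ∧ (H t ((y : ℂ) * Complex.I)).im = 0 ∧
      H t ((y : ℂ) * Complex.I) ≠ 0 := by
  rw [H_eq]
  refine ⟨by simpa using integral_F_pos t y, by simp, ?_⟩
  simp only [ne_eq, Complex.ofReal_eq_zero]
  exact (integral_F_pos t y).ne'
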